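/- There exists a countably infinite-branching stochastic game with a reachability objective and a vertex v with value 1/2 at which neither player has a winning strategy for the constraint ≥ 1/2: player Box has no strategy σ with P_v^{σ,π}(Reach(T)) ≥ 1/2 for all π, and player Diamond has no strategy π with P_v^{σ,π}(Reach(T)) < 1/2 for all σ. -/

import Mathlib

open scoped Classical

/-- A stochastic game: a directed graph with a total edge relation, vertices
partitioned among player Box, player Diamond and probabilistic vertices,
the latter carrying a positive probability distribution on outgoing edges. -/
structure SGame (V : Type*) where
  edge : V → V → Prop
  total : ∀ v, ∃ u, edge v u
  isBox : V → Prop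
  isDiamond : V → Prop
  isCirc : V → Prop
  cover : ∀ v, isBox v ∨ isDiamond v ∨ isCirc v
  disjBD : ∀ v, ¬ (isBox v ∧ isDiamond v)
  disjBC : ∀ v, ¬ (isBox v ∧ isCirc v)
  disjDC : ∀ v, ¬ (isDiamond v ∧ isCirc v)
  prob : V → V → ℝ
  prob_nonneg : ∀ v u, 0 ≤ prob v u
  prob_supp : ∀ v u, isCirc v → (0 < prob v u ↔ edge v u)
  prob_sum : ∀ v, isCirc v → ∑' u, prob v u = 1

/-- A history-dependent randomized strategy for the player owning the vertices
satisfying `own`: it assigns to every history `w` and current vertex `v` owned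
by the player a probability distribution on the outgoing edges of `v`. -/
structure SGame.Strat {V : Type*} (G : SGame V) (own : V → Prop) where
  f : List V → V → V → ℝ
  nonneg : ∀ w v u, 0 ≤ f w v u
  supp : ∀ w v u, own v → f w v u ≠ 0 → G.edge v u
  sum_one : ∀ w v, own v → ∑' u, f w v u = 1

/-- One-step transition probability of the play `G(σ,π)` given history `w`. -/
noncomputable def SGame.step {V : Type*} (G : SGame V) (σ : G.Strat G.isBox)
    (π : G.Strat G.isDiamond) (w : List V) (v u : V) : ℝ :=
  if G.isBox v then σ.f w v u else if G.isDiamond v then π.f w v u else G.prob v u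

/-- Probability of reaching the target set `T` from `v` within at most `n`
transitions in the play `G(σ,π)`, given that history `w` has elapsed. -/
noncomputable def SGame.reachN {V : Type*} (G : SGame V) (σ : G.Strat G.isBox)
    (π : G.Strat G.isDiamond) (T : Set V) : ℕ → List V → V → ℝ
  | 0, _, v => if v ∈ T then 1 else 0
  | n+1, w, v => if v ∈ T then 1 else
      ∑' u, G.step σ π w v u * SGame.reachN G σ π T n (w ++ [v]) u

/-- Probability `P_v^{σ,π}(Reach(T))` of reaching `T` from `v` in the play `G(σ,π)`. -/
noncomputable def SGame.reachP {V : Type*} (G : SGame V) (σ : G.Strat G.isBox)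
    (π : G.Strat G.isDiamond) (T : Set V) (v : V) : ℝ :=
  ⨆ n, G.reachN σ π T n [] v

/-- The (lower) value `sup_σ inf_π P_v^{σ,π}(Reach(T))` of vertex `v`. -/
noncomputable def SGame.val {V : Type*} (G : SGame V) (T : Set V) (v : V) : ℝ :=
  ⨆ σ : G.Strat G.isBox, ⨅ π : G.Strat G.isDiamond, G.reachP σ π T v

/-- The Bellman operator on functions `V → [0,1]`. -/
noncomputable def SGame.bellman {V : Type*} (G : SGame V) (T : Set V)
    (f : V → ℝ) : V → ℝ := fun v =>
  if v ∈ T then 1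
  else if G.isBox v then sSup (f '' {u | G.edge v u})
  else if G.isDiamond v then sInf (f '' {u | G.edge v u})
  else ∑' u, G.prob v u * f u


/-!
From `start` a fair coin leads to a Box vertex or a Diamond vertex. There Box picks a lottery
`m` reaching the target with probability `1 - 2⁻¹ ^ m`, and Diamond picks a lottery `m` reaching
it with probability `2⁻¹ ^ m`. Under `σ, π` the target is therefore reached with probability
`(a σ + b π) / 2`, where `a σ < 1` and `b π > 0` are the expected lottery payoffs; pure
strategies bring `a` arbitrarily close to `1` and `b` to `0`, but never reach these bounds.
So both `sup inf` and `inf sup` equal `1/2`, while neither player can guarantee the bound.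
-/

open Set Function

section Weights

variable {ι : Type*} {q g : ι → ℝ}

theorem exists_pos_of_tsum_eq_one (hq : ∑' i, q i = 1) : ∃ i, 0 < q i := by
  by_contra! h
  have : ∑' i, q i ≤ 0 := tsum_nonpos h
  linarith

theorem summable_of_tsum_eq_one (hq : ∑' i, q i = 1) : Summable q := by
  by_contra h
  rw [tsum_eq_zero_of_not_summable h] at hq
  exact zero_ne_one hq

theorem summable_mul_of_tsum_eq_one (hq0 : ∀ i, 0 ≤ q i) (hq : ∑' i, q i = 1)
    (hg0 : ∀ i, 0 ≤ g i) (hg1 : ∀ i, g i ≤ 1) : Summable fun i => q i * g i :=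
  (summable_of_tsum_eq_one hq).of_nonneg_of_le (fun i => mul_nonneg (hq0 i) (hg0 i))
    fun i => mul_le_of_le_one_right (hq0 i) (hg1 i)

theorem tsum_mul_lt_one (hq0 : ∀ i, 0 ≤ q i) (hq : ∑' i, q i = 1)
    (hg0 : ∀ i, 0 ≤ g i) (hg1 : ∀ i, g i < 1) : ∑' i, q i * g i < 1 := by
  obtain ⟨i, hi⟩ := exists_pos_of_tsum_eq_one hq
  calc ∑' i, q i * g i
      < ∑' i, q i :=
        Summable.tsum_lt_tsum (fun j => mul_le_of_le_one_right (hq0 j) (hg1 j).le)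
          (mul_lt_of_lt_one_right hi (hg1 i))
          (summable_mul_of_tsum_eq_one hq0 hq hg0 fun j => (hg1 j).le)
          (summable_of_tsum_eq_one hq)
    _ = 1 := hq

theorem tsum_mul_pos (hq0 : ∀ i, 0 ≤ q i) (hq : ∑' i, q i = 1)
    (hg0 : ∀ i, 0 < g i) (hg1 : ∀ i, g i ≤ 1) : 0 < ∑' i, q i * g i := by
  obtain ⟨i, hi⟩ := exists_pos_of_tsum_eq_one hq
  exact (summable_mul_of_tsum_eq_one hq0 hq (fun j => (hg0 j).le) hg1).tsum_pos
    (fun j => mul_nonneg (hq0 j) (hg0 j).le) i (mul_pos hi (hg0 i))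

end Weights

section HalfSum

variable {A B : Type*} {a : A → ℝ} {b : B → ℝ}

theorem ciSup_iInf_half_add (ha : ∀ σ, a σ < 1) (ha' : ∀ x < 1, ∃ σ, x < a σ)
    (hb : ∀ π, 0 < b π) (hb' : ∀ x > 0, ∃ π, b π < x) :
    ⨆ σ, ⨅ π, (a σ + b π) / 2 = 1 / 2 := by
  have : Nonempty A := (ha' 0 one_pos).nonempty
  have : Nonempty B := (hb' 1 one_pos).nonempty
  have inner : ∀ σ, ⨅ π, (a σ + b π) / 2 = a σ / 2 := fun σ =>
    ciInf_eq_of_forall_ge_of_forall_gt_exists_lt (fun π => by linarith [hb π]) fun x hx => by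
      obtain ⟨π, hπ⟩ := hb' (2 * x - a σ) (by linarith)
      exact ⟨π, by linarith⟩
  simp only [inner]
  refine ciSup_eq_of_forall_le_of_forall_lt_exists_gt (fun σ => by linarith [ha σ])
    fun x hx => ?_
  obtain ⟨σ, hσ⟩ := ha' (2 * x) (by linarith)
  exact ⟨σ, by linarith⟩

theorem ciInf_iSup_half_add (ha : ∀ σ, a σ < 1) (ha' : ∀ x < 1, ∃ σ, x < a σ)
    (hb : ∀ π, 0 < b π) (hb' : ∀ x > 0, ∃ π, b π < x) :
    ⨅ π, ⨆ σ, (a σ + b π) / 2 = 1 / 2 := by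
  have : Nonempty A := (ha' 0 one_pos).nonempty
  have : Nonempty B := (hb' 1 one_pos).nonempty
  have inner : ∀ π, ⨆ σ, (a σ + b π) / 2 = (1 + b π) / 2 := fun π =>
    ciSup_eq_of_forall_le_of_forall_lt_exists_gt (fun σ => by linarith [ha σ]) fun x hx => by
      obtain ⟨σ, hσ⟩ := ha' (2 * x - b π) (by linarith)
      exact ⟨σ, by linarith⟩
  simp only [inner]
  refine ciInf_eq_of_forall_ge_of_forall_gt_exists_lt (fun π => by linarith [hb π])
    fun x hx => ?_
  obtain ⟨π, hπ⟩ := hb' (2 * x - 1) (by linarith)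
  exact ⟨π, by linarith⟩

theorem not_exists_forall_half_le_half_add (ha : ∀ σ, a σ < 1)
    (hb' : ∀ x > 0, ∃ π, b π < x) :
    ¬ ∃ σ, ∀ π, (1 : ℝ) / 2 ≤ (a σ + b π) / 2 := by
  rintro ⟨σ, hσ⟩
  obtain ⟨π, hπ⟩ := hb' (1 - a σ) (by linarith [ha σ])
  linarith [hσ π]

theorem not_exists_forall_half_add_lt_half (ha' : ∀ x < 1, ∃ σ, x < a σ)
    (hb : ∀ π, 0 < b π) :
    ¬ ∃ π, ∀ σ, (a σ + b π) / 2 < 1 / 2 := by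
  rintro ⟨π, hπ⟩
  obtain ⟨σ, hσ⟩ := ha' (1 - b π) (by linarith [hb π])
  linarith [hπ σ]

end HalfSum

namespace SGame

variable {V : Type*} {G : SGame V} {σ : G.Strat G.isBox} {π : G.Strat G.isDiamond}
  {T : Set V} {n : ℕ} {w : List V} {v : V}

theorem step_of_isBox (hv : G.isBox v) : G.step σ π w v = σ.f w v :=
  funext fun _ => if_pos hv

theorem step_of_isDiamond (hv : G.isDiamond v) : G.step σ π w v = π.f w v :=
  funext fun _ => by rw [step, if_neg fun hb => G.disjBD v ⟨hb, hv⟩, if_pos hv]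

theorem step_of_isCirc (hv : G.isCirc v) : G.step σ π w v = G.prob v :=
  funext fun _ => by
    rw [step, if_neg fun hb => G.disjBC v ⟨hb, hv⟩, if_neg fun hd => G.disjDC v ⟨hd, hv⟩]

theorem reachN_of_mem (hv : v ∈ T) : G.reachN σ π T n w v = 1 := by
  cases n <;> simp [reachN, hv]

theorem reachN_zero_of_notMem (hv : v ∉ T) : G.reachN σ π T 0 w v = 0 :=
  if_neg hv

theorem reachN_succ_of_notMem (hv : v ∉ T) :
    G.reachN σ π T (n + 1) w v =
      ∑' u, G.step σ π w v u * G.reachN σ π T n (w ++ [v]) u :=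
  if_neg hv

namespace Strat

variable {own : V → Prop}

theorem tsum_mul_comp {ι : Type*} (τ : G.Strat own) (hv : own v) {e : ι → V}
    (he : Injective e) (hedge : {u | G.edge v u} ⊆ range e) (h : V → ℝ) :
    ∑' i, τ.f w v (e i) * h (e i) = ∑' u, τ.f w v u * h u :=
  he.tsum_eq fun u hu => hedge (τ.supp w v u hv (left_ne_zero_of_mul hu))

theorem tsum_comp_eq_one {ι : Type*} (τ : G.Strat own) (hv : own v) {e : ι → V}
    (he : Injective e) (hedge : {u | G.edge v u} ⊆ range e) :
    ∑' i, τ.f w v (e i) = 1 := by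
  simpa using (τ.tsum_mul_comp hv he hedge 1).trans (by simpa using τ.sum_one w v hv)

noncomputable def ofChoice (c : V → V) (hc : ∀ v, own v → G.edge v (c v)) : G.Strat own where
  f _ v u := if u = c v then 1 else 0
  nonneg _ _ _ := by split <;> norm_num
  supp _ v u hv hne := by
    split at hne
    · subst u; exact hc v hv
    · exact absurd rfl hne
  sum_one _ v _ := tsum_ite_eq (c v) 1

end Strat

end SGame

section TwoPoint

variable {α : Type*} {a b : α} {x : ℝ}

noncomputable def twoPoint (a b : α) (x : ℝ) (u : α) : ℝ :=
  if u = a then x else if u = b then 1 - x else 0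

theorem twoPoint_nonneg (hx : x ∈ Icc 0 1) (u : α) : 0 ≤ twoPoint a b x u := by
  unfold twoPoint
  split_ifs <;> linarith [hx.1, hx.2]

theorem tsum_twoPoint_mul (hab : a ≠ b) (g : α → ℝ) :
    ∑' u, twoPoint a b x u * g u = x * g a + (1 - x) * g b := by
  rw [tsum_eq_sum (s := {a, b}) fun u hu => ?_, Finset.sum_pair hab]
  · simp [twoPoint, hab.symm]
  · simp only [Finset.mem_insert, Finset.mem_singleton, not_or] at hu
    simp [twoPoint, hu.1, hu.2]

theorem exists_twoPoint_pos (hab : a ≠ b) (hx : x ∈ Icc 0 1) : ∃ u, 0 < twoPoint a b x u := by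
  rcases hx.1.eq_or_lt with rfl | hx0
  · exact ⟨b, by simp [twoPoint, hab.symm]⟩
  · exact ⟨a, by simpa [twoPoint] using hx0⟩

end TwoPoint

namespace NondeterminedGame

inductive Vertex : Type
  | start | boxTurn | diamondTurn | target | sink
  | boxLottery (m : ℕ) | diamondLottery (m : ℕ)
  deriving Countable

open Vertex

theorem boxLottery_injective : Injective boxLottery := fun _ _ h => boxLottery.inj h

theorem diamondLottery_injective : Injective diamondLottery := fun _ _ h => diamondLottery.inj h

noncomputable def prob : Vertex → Vertex → ℝ
  | start => twoPoint boxTurn diamondTurn (1 / 2)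
  | boxLottery m => twoPoint target sink (1 - 2⁻¹ ^ m)
  | diamondLottery m => twoPoint target sink (2⁻¹ ^ m)
  | target => twoPoint target sink 1
  | sink => twoPoint target sink 0
  | boxTurn | diamondTurn => 0

def edge : Vertex → Vertex → Prop
  | boxTurn, u => u ∈ range boxLottery
  | diamondTurn, u => u ∈ range diamondLottery
  | v, u => 0 < prob v u

theorem half_pow_mem_Icc (m : ℕ) : (2⁻¹ : ℝ) ^ m ∈ Icc 0 1 :=
  ⟨by positivity, pow_le_one₀ (by norm_num) (by norm_num)⟩

theorem prob_eq_twoPoint :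
    ∀ v, v ≠ boxTurn → v ≠ diamondTurn →
      ∃ a b x, a ≠ b ∧ x ∈ Icc (0 : ℝ) 1 ∧ prob v = twoPoint a b x
  | start, _, _ => ⟨boxTurn, diamondTurn, 1 / 2, by simp, by norm_num, rfl⟩
  | boxLottery m, _, _ =>
    ⟨target, sink, _, by simp,
      ⟨sub_nonneg.2 (half_pow_mem_Icc m).2, sub_le_self _ (half_pow_mem_Icc m).1⟩, rfl⟩
  | diamondLottery m, _, _ => ⟨target, sink, _, by simp, half_pow_mem_Icc m, rfl⟩
  | target, _, _ => ⟨target, sink, 1, by simp, by norm_num, rfl⟩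
  | sink, _, _ => ⟨target, sink, 0, by simp, by norm_num, rfl⟩

noncomputable def game : SGame Vertex where
  edge := edge
  total v := by
    by_cases hb : v = boxTurn
    · exact ⟨boxLottery 0, by subst hb; exact ⟨0, rfl⟩⟩
    by_cases hd : v = diamondTurn
    · exact ⟨diamondLottery 0, by subst hd; exact ⟨0, rfl⟩⟩
    obtain ⟨a, b, x, hab, hx, hv⟩ := prob_eq_twoPoint v hb hd
    obtain ⟨u, hu⟩ := exists_twoPoint_pos hab hx
    refine ⟨u, ?_⟩
    cases v <;> first | exact absurd rfl hb | exact absurd rfl hd | exact (hv ▸ hu : 0 < prob _ u)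
  isBox v := v = boxTurn
  isDiamond v := v = diamondTurn
  isCirc v := v ≠ boxTurn ∧ v ≠ diamondTurn
  cover v := by tauto
  disjBD v := by rintro ⟨rfl, ⟨⟩⟩
  disjBC _ h := h.2.1 h.1
  disjDC _ h := h.2.2 h.1
  prob := prob
  prob_nonneg v u := by
    by_cases hb : v = boxTurn
    · subst hb; exact le_rfl
    by_cases hd : v = diamondTurn
    · subst hd; exact le_rfl
    obtain ⟨a, b, x, -, hx, hv⟩ := prob_eq_twoPoint v hb hd
    exact hv ▸ twoPoint_nonneg hx u
  prob_supp v u hv := by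
    cases v <;> first | exact absurd rfl hv.1 | exact absurd rfl hv.2 | exact Iff.rfl
  prob_sum v hv := by
    obtain ⟨a, b, x, hab, -, hv⟩ := prob_eq_twoPoint v hv.1 hv.2
    simpa [hv] using tsum_twoPoint_mul (x := x) hab fun _ => 1

section Play

variable (σ : game.Strat game.isBox) (π : game.Strat game.isDiamond)
  {n : ℕ} {w : List Vertex}

noncomputable def boxProb (w : List Vertex) : ℝ :=
  ∑' m, σ.f w boxTurn (boxLottery m) * (1 - 2⁻¹ ^ m)

noncomputable def diamondProb (w : List Vertex) : ℝ :=
  ∑' m, π.f w diamondTurn (diamondLottery m) * 2⁻¹ ^ m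

theorem reachN_succ_of_twoPoint {v a b : Vertex} {x : ℝ} (hv : v ≠ target)
    (hb : v ≠ boxTurn) (hd : v ≠ diamondTurn) (hab : a ≠ b)
    (hprob : prob v = twoPoint a b x) :
    game.reachN σ π {target} (n + 1) w v =
      x * game.reachN σ π {target} n (w ++ [v]) a
        + (1 - x) * game.reachN σ π {target} n (w ++ [v]) b := by
  rw [SGame.reachN_succ_of_notMem (mem_singleton_iff.not.2 hv),
    SGame.step_of_isCirc (G := game) ⟨hb, hd⟩, show game.prob v = twoPoint a b x from hprob]
  exact tsum_twoPoint_mul hab _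

theorem reachN_sink : game.reachN σ π {target} n w sink = 0 := by
  induction n generalizing w with
  | zero => exact SGame.reachN_zero_of_notMem (by simp)
  | succ n ih =>
    rw [reachN_succ_of_twoPoint σ π (by simp) (by simp) (by simp) (by simp) rfl, ih]
    ring

theorem reachN_boxLottery (m : ℕ) :
    game.reachN σ π {target} (n + 1) w (boxLottery m) = 1 - 2⁻¹ ^ m := by
  rw [reachN_succ_of_twoPoint σ π (by simp) (by simp) (by simp) (by simp) rfl,
    SGame.reachN_of_mem (mem_singleton target), reachN_sink]
  ring

theorem reachN_diamondLottery (m : ℕ) :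
    game.reachN σ π {target} (n + 1) w (diamondLottery m) = 2⁻¹ ^ m := by
  rw [reachN_succ_of_twoPoint σ π (by simp) (by simp) (by simp) (by simp) rfl,
    SGame.reachN_of_mem (mem_singleton target), reachN_sink]
  ring

theorem reachN_succ_boxTurn :
    game.reachN σ π {target} (n + 1) w boxTurn =
      ∑' m, σ.f w boxTurn (boxLottery m) *
        game.reachN σ π {target} n (w ++ [boxTurn]) (boxLottery m) := by
  rw [SGame.reachN_succ_of_notMem (by simp), SGame.step_of_isBox rfl,
    σ.tsum_mul_comp rfl boxLottery_injective subset_rfl]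

theorem reachN_succ_diamondTurn :
    game.reachN σ π {target} (n + 1) w diamondTurn =
      ∑' m, π.f w diamondTurn (diamondLottery m) *
        game.reachN σ π {target} n (w ++ [diamondTurn]) (diamondLottery m) := by
  rw [SGame.reachN_succ_of_notMem (by simp), SGame.step_of_isDiamond rfl,
    π.tsum_mul_comp rfl diamondLottery_injective subset_rfl]

theorem reachN_boxTurn : game.reachN σ π {target} (n + 2) w boxTurn = boxProb σ w := by
  simp only [reachN_succ_boxTurn, reachN_boxLottery, boxProb]

theorem reachN_diamondTurn :
    game.reachN σ π {target} (n + 2) w diamondTurn = diamondProb π w := by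
  simp only [reachN_succ_diamondTurn, reachN_diamondLottery, diamondProb]

theorem reachN_start_of_lt_three (hn : n < 3) : game.reachN σ π {target} n w start = 0 := by
  have hstart := fun k => reachN_succ_of_twoPoint σ π (n := k) (w := w) (v := start)
    (by simp) (by simp) (by simp) (by simp) rfl
  interval_cases n
  · exact SGame.reachN_zero_of_notMem (by simp)
  · simp [hstart, SGame.reachN_zero_of_notMem]
  · simp [hstart, reachN_succ_boxTurn, reachN_succ_diamondTurn, SGame.reachN_zero_of_notMem]

theorem reachN_start : game.reachN σ π {target} (n + 3) [] start =
    (boxProb σ [start] + diamondProb π [start]) / 2 := by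
  rw [reachN_succ_of_twoPoint σ π (by simp) (by simp) (by simp) (by simp) rfl,
    List.nil_append, reachN_boxTurn, reachN_diamondTurn]
  ring

theorem boxProb_lt_one : boxProb σ w < 1 :=
  tsum_mul_lt_one (fun _ => σ.nonneg _ _ _)
    (σ.tsum_comp_eq_one rfl boxLottery_injective subset_rfl)
    (fun m => sub_nonneg.2 (half_pow_mem_Icc m).2) fun m => sub_lt_self _ (by positivity)

theorem diamondProb_pos : 0 < diamondProb π w :=
  tsum_mul_pos (fun _ => π.nonneg _ _ _)
    (π.tsum_comp_eq_one rfl diamondLottery_injective subset_rfl) (fun _ => by positivity)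
    fun m => (half_pow_mem_Icc m).2

theorem boxProb_nonneg : 0 ≤ boxProb σ w :=
  tsum_nonneg fun m => mul_nonneg (σ.nonneg _ _ _) (sub_nonneg.2 (half_pow_mem_Icc m).2)

theorem reachP_start : game.reachP σ π {target} start =
    (boxProb σ [start] + diamondProb π [start]) / 2 := by
  refine ciSup_eq_of_forall_le_of_forall_lt_exists_gt (fun n => ?_) fun x hx =>
    ⟨3, by rwa [reachN_start σ π (n := 0)]⟩
  rcases lt_or_ge n 3 with hn | hn
  · rw [reachN_start_of_lt_three σ π hn]
    linarith [boxProb_nonneg σ (w := [start]), diamondProb_pos π (w := [start])]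
  · obtain ⟨k, rfl⟩ := Nat.exists_eq_add_of_le' hn
    exact (reachN_start σ π).le

end Play

noncomputable def boxPure (k : ℕ) : game.Strat game.isBox :=
  SGame.Strat.ofChoice (fun _ => boxLottery k) fun _ hv => hv ▸ ⟨k, rfl⟩

noncomputable def diamondPure (k : ℕ) : game.Strat game.isDiamond :=
  SGame.Strat.ofChoice (fun _ => diamondLottery k) fun _ hv => hv ▸ ⟨k, rfl⟩

theorem boxProb_boxPure (k : ℕ) (w : List Vertex) : boxProb (boxPure k) w = 1 - 2⁻¹ ^ k := by
  simp [boxProb, boxPure, SGame.Strat.ofChoice]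

theorem diamondProb_diamondPure (k : ℕ) (w : List Vertex) :
    diamondProb (diamondPure k) w = 2⁻¹ ^ k := by
  simp [diamondProb, diamondPure, SGame.Strat.ofChoice]

theorem exists_lt_boxProb (w : List Vertex) {x : ℝ} (hx : x < 1) : ∃ σ, x < boxProb σ w := by
  obtain ⟨k, hk⟩ := exists_pow_lt_of_lt_one (sub_pos.2 hx) (by norm_num : (2⁻¹ : ℝ) < 1)
  exact ⟨boxPure k, by rw [boxProb_boxPure]; linarith⟩

theorem exists_diamondProb_lt (w : List Vertex) {x : ℝ} (hx : 0 < x) :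
    ∃ π, diamondProb π w < x := by
  obtain ⟨k, hk⟩ := exists_pow_lt_of_lt_one hx (by norm_num : (2⁻¹ : ℝ) < 1)
  exact ⟨diamondPure k, by rwa [diamondProb_diamondPure]⟩

end NondeterminedGame

open NondeterminedGame Vertex

/-- There is a countably infinite-branching stochastic game with a
reachability objective and a vertex of value `1/2` where neither player has a
winning strategy for the constraint `≥ 1/2`. -/
theorem exists_nondetermined_game :
    ∃ (V : Type) (G : SGame V) (T : Set V) (v : V),
      Countable V ∧ (∃ v0 : V, ¬ {u | G.edge v0 u}.Finite) ∧
      G.val T v = 1 / 2 ∧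
      (⨅ π : G.Strat G.isDiamond, ⨆ σ : G.Strat G.isBox, G.reachP σ π T v) = 1 / 2 ∧
      (¬ ∃ σ : G.Strat G.isBox, ∀ π : G.Strat G.isDiamond,
          (1:ℝ)/2 ≤ G.reachP σ π T v) ∧
      (¬ ∃ π : G.Strat G.isDiamond, ∀ σ : G.Strat G.isBox,
          G.reachP σ π T v < 1/2) := by
  have ha := fun σ => boxProb_lt_one σ (w := [start])
  have ha' := fun x => exists_lt_boxProb [start] (x := x)
  have hb := fun π => diamondProb_pos π (w := [start])
  have hb' := fun x => exists_diamondProb_lt [start] (x := x)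
  refine ⟨Vertex, game, {target}, start, inferInstance,
    ⟨boxTurn, infinite_range_of_injective boxLottery_injective⟩, ?_, ?_, ?_, ?_⟩ <;>
    simp only [SGame.val, reachP_start]
  · exact ciSup_iInf_half_add ha ha' hb hb'
  · exact ciInf_iSup_half_add ha ha' hb hb'
  · exact not_exists_forall_half_le_half_add ha hb'
  · exact not_exists_forall_half_add_lt_half ha' hb
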